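/- arXiv:1602.04951 — 4 statements merged into one kernel-verified Lean document; each statement's English description precedes it below -/
import Mathlib

section
/- For any target policy π, behavior policy μ, λ ∈ [0,1], and Q-function Q, the following identity holds: R^π_λ Q − Q^π = γ ∑_{t≥0} (λγ)^t (P^μ)^t [ (1−λ) P^π + λ (P^π − P^μ) ] (Q − Q^π), where R^π_λ Q := Q + ∑_{t≥0} (λγ)^t (P^μ)^t (T^π Q − Q). -/
open scoped BigOperators

noncomputable section

/-- The operator `P^π` on Q-functions. -/
def Pop {X A : Type*} [Fintype X] [Fintype A] (P : X → A → X → ℝ) (π : X → A → ℝ)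
    (Q : X × A → ℝ) : X × A → ℝ :=
  fun p => ∑ y : X, ∑ b : A, P p.1 p.2 y * π y b * Q (y, b)

/-- The Bellman operator `T^π Q = r + γ P^π Q`. -/
def Tpol {X A : Type*} [Fintype X] [Fintype A] (P : X → A → X → ℝ) (π : X → A → ℝ)
    (γ : ℝ) (r : X × A → ℝ) (Q : X × A → ℝ) : X × A → ℝ :=
  r + γ • Pop P π Q

/-- The off-policy corrected λ-operator
`R^π_λ Q = Q + ∑_{t≥0} (λγ)^t (P^μ)^t (T^π Q − Q)`. -/
def Rpi {X A : Type*} [Fintype X] [Fintype A] (P : X → A → X → ℝ) (π μ : X → A → ℝ)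
    (γ lam : ℝ) (r : X × A → ℝ) (Q : X × A → ℝ) : X × A → ℝ :=
  Q + ∑' t : ℕ, (lam * γ) ^ t • (Pop P μ)^[t] (Tpol P π γ r Q - Q)

/-! Write `Δ = Q - Q^π` and `c = λγ`. The Bellman equation for `Q^π` gives `T^π Q - Q = γ P^π Δ - Δ`,
and the bracket on the right equals `P^π Δ - λ P^μ Δ`, so the two sides differ by the series
`∑ c^t (P^μ)^t (Δ - c P^μ Δ)`, which telescopes to `Δ`: it is the Neumann series of
`(1 - c P^μ)⁻¹` applied to `(1 - c P^μ) Δ`, convergent because `P^μ` does not increase the sup norm. -/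

section NeumannSeries

variable {𝕜 E : Type*} [NormedField 𝕜] [NormedAddCommGroup E] [NormedSpace 𝕜 E]

lemma norm_iterate_le_of_norm_map_le {M : E → E} (hM : ∀ f, ‖M f‖ ≤ ‖f‖) (t : ℕ) (f : E) :
    ‖M^[t] f‖ ≤ ‖f‖ := by
  induction t with
  | zero => rfl
  | succ t ih =>
    rw [Function.iterate_succ_apply']
    exact (hM _).trans ih

lemma summable_pow_smul_iterate [CompleteSpace E] {M : E → E} (hM : ∀ f, ‖M f‖ ≤ ‖f‖)
    {c : 𝕜} (hc : ‖c‖ < 1) (f : E) : Summable fun t : ℕ => c ^ t • M^[t] f := by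
  refine .of_norm_bounded ((summable_geometric_of_lt_one (norm_nonneg c) hc).mul_right ‖f‖)
    fun t => ?_
  rw [norm_smul, norm_pow]
  exact mul_le_mul_of_nonneg_left (norm_iterate_le_of_norm_map_le hM t f) (by positivity)

variable [CompleteSpace E] {M : E →ₗ[𝕜] E} (hM : ∀ f, ‖M f‖ ≤ ‖f‖) {c : 𝕜} (hc : ‖c‖ < 1)

def neumannSeries : E →ₗ[𝕜] E where
  toFun f := ∑' t : ℕ, c ^ t • M^[t] f
  map_add' f g := by
    simp only [iterate_map_add, smul_add]
    exact (summable_pow_smul_iterate hM hc f).tsum_add (summable_pow_smul_iterate hM hc g)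
  map_smul' a f := by
    simp only [← Module.End.pow_apply, map_smul, smul_comm _ a, RingHom.id_apply]
    simp only [Module.End.pow_apply]
    exact (summable_pow_smul_iterate hM hc f).tsum_const_smul a

lemma neumannSeries_apply (f : E) : neumannSeries hM hc f = ∑' t : ℕ, c ^ t • M^[t] f :=
  rfl

lemma neumannSeries_apply_eq_add_smul (f : E) :
    neumannSeries hM hc f = f + c • neumannSeries hM hc (M f) := by
  rw [neumannSeries_apply, (summable_pow_smul_iterate hM hc f).tsum_eq_zero_add,
    neumannSeries_apply, ← (summable_pow_smul_iterate hM hc (M f)).tsum_const_smul c]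
  simp only [pow_zero, one_smul, Function.iterate_zero_apply, Function.iterate_succ_apply,
    smul_smul, pow_succ']

lemma neumannSeries_apply_sub_smul (f : E) : neumannSeries hM hc (f - c • M f) = f := by
  rw [map_sub, map_smul, neumannSeries_apply_eq_add_smul hM hc f, add_sub_cancel_right]

end NeumannSeries

section MDP

variable {X A : Type*} [Fintype X] [Fintype A]

def popLinearMap (P : X → A → X → ℝ) (π : X → A → ℝ) : Module.End ℝ (X × A → ℝ) where
  toFun := Pop P π
  map_add' f g := by
    funext p
    simp only [Pop, Pi.add_apply, mul_add, Finset.sum_add_distrib]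
  map_smul' c f := by
    funext p
    simp only [Pop, Pi.smul_apply, smul_eq_mul, RingHom.id_apply, Finset.mul_sum]
    exact Finset.sum_congr rfl fun y _ => Finset.sum_congr rfl fun b _ => by ring

@[simp]
lemma coe_popLinearMap (P : X → A → X → ℝ) (π : X → A → ℝ) : ⇑(popLinearMap P π) = Pop P π :=
  rfl

lemma norm_Pop_le (P : X → A → X → ℝ) (hP0 : ∀ x a y, 0 ≤ P x a y)
    (hP1 : ∀ x a, ∑ y : X, P x a y = 1) (μ : X → A → ℝ) (hμ0 : ∀ x a, 0 ≤ μ x a)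
    (hμ1 : ∀ x, ∑ a : A, μ x a = 1) (f : X × A → ℝ) : ‖Pop P μ f‖ ≤ ‖f‖ := by
  refine (pi_norm_le_iff_of_nonneg (norm_nonneg f)).2 fun p => ?_
  calc ‖Pop P μ f p‖ ≤ ∑ y : X, ∑ b : A, P p.1 p.2 y * μ y b * ‖f‖ := by
        refine (norm_sum_le _ _).trans <| Finset.sum_le_sum fun y _ =>
          (norm_sum_le _ _).trans <| Finset.sum_le_sum fun b _ => ?_
        rw [norm_mul, norm_mul, Real.norm_of_nonneg (hP0 _ _ _), Real.norm_of_nonneg (hμ0 _ _)]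
        exact mul_le_mul_of_nonneg_left (norm_le_pi_norm f (y, b))
          (mul_nonneg (hP0 _ _ _) (hμ0 _ _))
    _ = ‖f‖ := by
        simp only [mul_assoc, ← Finset.mul_sum, ← Finset.sum_mul, hμ1, one_mul, hP1]

end MDP

theorem stmt5_general {X A : Type*} [Fintype X] [Fintype A]
    (P : X → A → X → ℝ)
    (hP0 : ∀ x a y, 0 ≤ P x a y) (hP1 : ∀ x a, ∑ y : X, P x a y = 1)
    (π μ : X → A → ℝ)
    (hμ0 : ∀ x a, 0 ≤ μ x a) (hμ1 : ∀ x, ∑ a : A, μ x a = 1)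
    (γ : ℝ) (hγ0 : 0 ≤ γ) (hγ1 : γ < 1)
    (lam : ℝ) (hl0 : 0 ≤ lam) (hl1 : lam ≤ 1)
    (r : X × A → ℝ) (Qπ : X × A → ℝ)
    (hQπ : Qπ = r + γ • Pop P π Qπ)
    (Q : X × A → ℝ) :
    Rpi P π μ γ lam r Q - Qπ =
      γ • ∑' t : ℕ, (lam * γ) ^ t •
        (Pop P μ)^[t]
          ((1 - lam) • Pop P π (Q - Qπ) +
            lam • (Pop P π (Q - Qπ) - Pop P μ (Q - Qπ))) := by
  set M := popLinearMap P μ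
  set Δ := Q - Qπ
  set B := (1 - lam) • Pop P π Δ + lam • (Pop P π Δ - Pop P μ Δ)
  have hM : ∀ f, ‖M f‖ ≤ ‖f‖ := norm_Pop_le P hP0 hP1 μ hμ0 hμ1
  have hc : ‖lam * γ‖ < 1 := by
    rw [Real.norm_of_nonneg (by positivity)]
    nlinarith
  have hbellman : Tpol P π γ r Q - Q = γ • B - (Δ - (lam * γ) • M Δ) := by
    have hΔ : Pop P π Δ = Pop P π Q - Pop P π Qπ := map_sub (popLinearMap P π) Q Qπ
    rw [Tpol, eq_sub_of_add_eq hQπ.symm]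
    simp only [M, B, coe_popLinearMap, hΔ, Δ]
    module
  rw [Rpi, ← coe_popLinearMap P μ, ← neumannSeries_apply hM hc, ← neumannSeries_apply hM hc,
    hbellman, map_sub, map_smul, neumannSeries_apply_sub_smul]
  simp only [Δ, M]
  abel

/-- the error-propagation identity
`R^π_λ Q − Q^π = γ ∑_{t≥0} (λγ)^t (P^μ)^t [ (1−λ) P^π + λ (P^π − P^μ) ] (Q − Q^π)`. -/
theorem stmt5 {X A : Type*} [Fintype X] [Fintype A] [Nonempty X] [Nonempty A]
    (P : X → A → X → ℝ)
    (hP0 : ∀ x a y, 0 ≤ P x a y) (hP1 : ∀ x a, ∑ y : X, P x a y = 1)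
    (π μ : X → A → ℝ)
    (hπ0 : ∀ x a, 0 ≤ π x a) (hπ1 : ∀ x, ∑ a : A, π x a = 1)
    (hμ0 : ∀ x a, 0 ≤ μ x a) (hμ1 : ∀ x, ∑ a : A, μ x a = 1)
    (γ : ℝ) (hγ0 : 0 ≤ γ) (hγ1 : γ < 1)
    (lam : ℝ) (hl0 : 0 ≤ lam) (hl1 : lam ≤ 1)
    (r : X × A → ℝ) (Qπ : X × A → ℝ)
    (hQπ : Qπ = r + γ • Pop P π Qπ)
    (Q : X × A → ℝ) :
    Rpi P π μ γ lam r Q - Qπ =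
      γ • ∑' t : ℕ, (lam * γ) ^ t •
        (Pop P μ)^[t]
          ((1 - lam) • Pop P π (Q - Qπ) +
            lam • (Pop P π (Q - Qπ) - Pop P μ (Q - Qπ))) :=
  stmt5_general P hP0 hP1 π μ hμ0 hμ1 γ hγ0 hγ1 lam hl0 hl1 r Qπ hQπ Q
end
end

section
/- (Lemma 1, off-policy Q^π(λ) convergence.) Suppose max_{x} ∑_{a} |π(a|x) − μ(a|x)| ≤ ε with 0 < λ ≤ 1, γ ∈ (0,1) and ε < (1−γ)/(λγ). Then for every Q-function Q and every k ≥ 0, the iterates Q_k = (R^π_λ)^k Q satisfy ‖Q_k − Q^π‖ ≤ η^k ‖Q − Q^π‖ with η = γ(1−λ+λε)/(1−λγ) < 1; in particular Q_k converges to Q^π (exponentially fast) in sup norm. -/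
open scoped BigOperators

noncomputable section

open Filter Topology

/-!
Write `h = Q - Q^π`. Since `Q^π` is the fixed point of `T^π`, we have `T^π Q - Q = γ P^π h - h`,
and telescoping `∑ (λγ)^t (P^μ)^t h = h + λγ ∑ (λγ)^t (P^μ)^t (P^μ h)` gives
`R^π_λ Q - Q^π = ∑_t (λγ)^t (P^μ)^t (γ P^π h - λγ P^μ h)`.
Stochastic operators are sup-norm nonexpansive, and splitting
`γ P^π h - λγ P^μ h = (1 - λ) γ P^π h + λγ (P^π - P^μ) h` bounds the summand by
`γ (1 - λ + λε) ‖h‖`. Summing the geometric series, `R^π_λ` contracts towards `Q^π`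
with factor `η = γ (1 - λ + λε) / (1 - λγ)`.
-/

section Nonexpansive

variable {E : Type*} [NormedAddCommGroup E]

lemma norm_iterate_le_of_nonexpansive {L : E → E} (hL : ∀ f, ‖L f‖ ≤ ‖f‖) (t : ℕ) (f : E) :
    ‖L^[t] f‖ ≤ ‖f‖ := by
  induction t generalizing f with
  | zero => rfl
  | succ t ih => exact (ih (L f)).trans (hL f)

lemma norm_iterate_sub_le_of_contracting {F : E → E} {p : E} {η : ℝ} (hη : 0 ≤ η)
    (hF : ∀ Q, ‖F Q - p‖ ≤ η * ‖Q - p‖) (k : ℕ) (Q : E) :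
    ‖F^[k] Q - p‖ ≤ η ^ k * ‖Q - p‖ := by
  induction k with
  | zero => simp
  | succ k ih =>
    rw [Function.iterate_succ_apply', pow_succ', mul_assoc]
    exact (hF _).trans (mul_le_mul_of_nonneg_left ih hη)

lemma tendsto_iterate_of_contracting {F : E → E} {p : E} {η : ℝ} (hη0 : 0 ≤ η) (hη1 : η < 1)
    (hF : ∀ Q, ‖F Q - p‖ ≤ η * ‖Q - p‖) (Q : E) :
    Tendsto (fun k : ℕ => F^[k] Q) atTop (𝓝 p) := by
  rw [tendsto_iff_norm_sub_tendsto_zero]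
  refine squeeze_zero (fun k => norm_nonneg _) (norm_iterate_sub_le_of_contracting hη0 hF · Q) ?_
  simpa using (tendsto_pow_atTop_nhds_zero_of_lt_one hη0 hη1).mul_const ‖Q - p‖

variable [NormedSpace ℝ E]

lemma norm_geometric_smul_iterate_le {L : E → E} (hL : ∀ f, ‖L f‖ ≤ ‖f‖) {q : ℝ} (hq0 : 0 ≤ q)
    (t : ℕ) (f : E) : ‖q ^ t • L^[t] f‖ ≤ q ^ t * ‖f‖ := by
  rw [norm_smul, Real.norm_of_nonneg (pow_nonneg hq0 t)]
  exact mul_le_mul_of_nonneg_left (norm_iterate_le_of_nonexpansive hL t f) (pow_nonneg hq0 t)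

lemma summable_geometric_smul_iterate [CompleteSpace E] {L : E → E} (hL : ∀ f, ‖L f‖ ≤ ‖f‖)
    {q : ℝ} (hq0 : 0 ≤ q) (hq1 : q < 1) (f : E) :
    Summable fun t : ℕ => q ^ t • L^[t] f :=
  Summable.of_norm_bounded ((summable_geometric_of_lt_one hq0 hq1).mul_right ‖f‖)
    (norm_geometric_smul_iterate_le hL hq0 · f)

lemma norm_tsum_geometric_smul_iterate_le {L : E → E} (hL : ∀ f, ‖L f‖ ≤ ‖f‖) {q : ℝ}
    (hq0 : 0 ≤ q) (hq1 : q < 1) (f : E) :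
    ‖∑' t : ℕ, q ^ t • L^[t] f‖ ≤ ‖f‖ / (1 - q) := by
  refine tsum_of_norm_bounded ?_ (norm_geometric_smul_iterate_le hL hq0 · f)
  rw [div_eq_mul_inv, mul_comm]
  exact (hasSum_geometric_of_lt_one hq0 hq1).mul_right ‖f‖

lemma tsum_geometric_smul_iterate_eq_add [CompleteSpace E] {L : E → E}
    (hL : ∀ f, ‖L f‖ ≤ ‖f‖) {q : ℝ} (hq0 : 0 ≤ q) (hq1 : q < 1) (f : E) :
    ∑' t : ℕ, q ^ t • L^[t] f = f + q • ∑' t : ℕ, q ^ t • L^[t] (L f) := by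
  rw [(summable_geometric_smul_iterate hL hq0 hq1 f).tsum_eq_zero_add, ← tsum_const_smul'']
  simp only [pow_zero, one_smul, Function.iterate_zero_apply, Function.iterate_succ_apply,
    pow_succ', mul_smul]

lemma tsum_geometric_smul_iterate_sub [CompleteSpace E] (L : E →ₗ[ℝ] E)
    (hL : ∀ f, ‖L f‖ ≤ ‖f‖) {q : ℝ} (hq0 : 0 ≤ q) (hq1 : q < 1) (g h : E) :
    ∑' t : ℕ, q ^ t • L^[t] (g - h) = ∑' t : ℕ, q ^ t • L^[t] (g - q • L h) - h := by
  have hlin : ∀ (t : ℕ) (u v : E), q ^ t • L^[t] (u - v) = q ^ t • L^[t] u - q ^ t • L^[t] v :=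
    fun t u v => by simp only [← Module.End.pow_apply, map_sub, smul_sub]
  have hsum := summable_geometric_smul_iterate hL hq0 hq1
  simp only [hlin]
  rw [Summable.tsum_sub (hsum g) (hsum h), Summable.tsum_sub (hsum g) (hsum _),
    tsum_geometric_smul_iterate_eq_add hL hq0 hq1 h]
  simp only [← Module.End.pow_apply, map_smul, smul_comm _ q, tsum_const_smul'']
  abel

end Nonexpansive

section MDP

variable {X A : Type*} [Fintype X] [Fintype A]

def popLinear (P : X → A → X → ℝ) (ρ : X → A → ℝ) : (X × A → ℝ) →ₗ[ℝ] X × A → ℝ where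
  toFun := Pop P ρ
  map_add' f g := by
    funext p
    simp only [Pop, Pi.add_apply, ← Finset.sum_add_distrib, mul_add]
  map_smul' c f := by
    funext p
    simp only [Pop, Pi.smul_apply, smul_eq_mul, RingHom.id_apply, Finset.mul_sum]
    exact Finset.sum_congr rfl fun y _ => Finset.sum_congr rfl fun b _ => by ring

@[simp]
lemma coe_popLinear (P : X → A → X → ℝ) (ρ : X → A → ℝ) : ⇑(popLinear P ρ) = Pop P ρ := rfl

lemma Pop_sub_Pop (P : X → A → X → ℝ) (π μ : X → A → ℝ) (f : X × A → ℝ) :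
    Pop P π f - Pop P μ f = Pop P (π - μ) f := by
  funext p
  simp only [Pop, Pi.sub_apply, ← Finset.sum_sub_distrib, sub_mul, mul_sub]

variable {P : X → A → X → ℝ} (hP0 : ∀ x a y, 0 ≤ P x a y) (hP1 : ∀ x a, ∑ y : X, P x a y = 1)
include hP0 hP1

lemma norm_Pop_le_s8 {ρ : X → A → ℝ} {c : ℝ} (hc : 0 ≤ c) (hρ : ∀ x, ∑ a : A, |ρ x a| ≤ c)
    (f : X × A → ℝ) : ‖Pop P ρ f‖ ≤ c * ‖f‖ := by
  refine (pi_norm_le_iff_of_nonneg (by positivity)).2 fun p => ?_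
  have hrow : ∀ y, ∑ b, |P p.1 p.2 y * ρ y b * f (y, b)| ≤ P p.1 p.2 y * (c * ‖f‖) := fun y =>
    calc ∑ b, |P p.1 p.2 y * ρ y b * f (y, b)| ≤ ∑ b, P p.1 p.2 y * (|ρ y b| * ‖f‖) := by
          gcongr with b
          rw [abs_mul, abs_mul, abs_of_nonneg (hP0 _ _ _), mul_assoc]
          exact mul_le_mul_of_nonneg_left
            (mul_le_mul_of_nonneg_left (norm_le_pi_norm f (y, b)) (abs_nonneg _)) (hP0 _ _ _)
      _ = P p.1 p.2 y * ((∑ b, |ρ y b|) * ‖f‖) := by rw [← Finset.mul_sum, ← Finset.sum_mul]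
      _ ≤ P p.1 p.2 y * (c * ‖f‖) := by gcongr; exacts [hP0 _ _ _, hρ y]
  calc ‖Pop P ρ f p‖ ≤ ∑ y, ∑ b, |P p.1 p.2 y * ρ y b * f (y, b)| :=
        (Finset.abs_sum_le_sum_abs _ _).trans
          (Finset.sum_le_sum fun y _ => Finset.abs_sum_le_sum_abs _ _)
    _ ≤ ∑ y, P p.1 p.2 y * (c * ‖f‖) := Finset.sum_le_sum fun y _ => hrow y
    _ = c * ‖f‖ := by rw [← Finset.sum_mul, hP1, one_mul]

lemma norm_Pop_le_norm {ρ : X → A → ℝ} (hρ0 : ∀ x a, 0 ≤ ρ x a) (hρ1 : ∀ x, ∑ a : A, ρ x a = 1)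
    (f : X × A → ℝ) : ‖Pop P ρ f‖ ≤ ‖f‖ := by
  simpa using norm_Pop_le_s8 hP0 hP1 zero_le_one
    (fun x => by simp only [abs_of_nonneg (hρ0 x _), hρ1 x, le_refl]) f

variable {π μ : X → A → ℝ}
  (hπ0 : ∀ x a, 0 ≤ π x a) (hπ1 : ∀ x, ∑ a : A, π x a = 1)
  (hμ0 : ∀ x a, 0 ≤ μ x a) (hμ1 : ∀ x, ∑ a : A, μ x a = 1)

omit hP0 hP1 in
lemma Tpol_sub_self {γ : ℝ} {r Qπ : X × A → ℝ} (hQπ : Qπ = r + γ • Pop P π Qπ)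
    (Q : X × A → ℝ) : Tpol P π γ r Q - Q = γ • Pop P π (Q - Qπ) - (Q - Qπ) := by
  rw [← coe_popLinear, map_sub, coe_popLinear, Tpol]
  nth_rewrite 2 [hQπ]
  rw [smul_sub]
  abel

include hμ0 hμ1 in
lemma Rpi_sub_eq {γ lam : ℝ} (hq0 : 0 ≤ lam * γ) (hq1 : lam * γ < 1) {r Qπ : X × A → ℝ}
    (hQπ : Qπ = r + γ • Pop P π Qπ) (Q : X × A → ℝ) :
    Rpi P π μ γ lam r Q - Qπ = ∑' t : ℕ, (lam * γ) ^ t •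
      (Pop P μ)^[t] (γ • Pop P π (Q - Qπ) - (lam * γ) • Pop P μ (Q - Qπ)) := by
  have htelescope := tsum_geometric_smul_iterate_sub (popLinear P μ)
    (norm_Pop_le_norm hP0 hP1 hμ0 hμ1) hq0 hq1 (γ • Pop P π (Q - Qπ)) (Q - Qπ)
  rw [coe_popLinear] at htelescope
  rw [Rpi, Tpol_sub_self hQπ, htelescope]
  abel

include hπ0 hπ1 in
lemma norm_smul_Pop_sub_smul_Pop_le {ε : ℝ} (hε0 : 0 ≤ ε) (hε : ∀ x, ∑ a : A, |π x a - μ x a| ≤ ε)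
    {γ lam : ℝ} (hγ0 : 0 ≤ γ) (hl0 : 0 ≤ lam) (hl1 : lam ≤ 1) (h : X × A → ℝ) :
    ‖γ • Pop P π h - (lam * γ) • Pop P μ h‖ ≤ γ * (1 - lam + lam * ε) * ‖h‖ := by
  have hdiff : ‖Pop P π h - Pop P μ h‖ ≤ ε * ‖h‖ := by
    rw [Pop_sub_Pop]
    exact norm_Pop_le_s8 hP0 hP1 hε0 (by simpa using hε) h
  have hsplit : γ • Pop P π h - (lam * γ) • Pop P μ h
      = ((1 - lam) * γ) • Pop P π h + (lam * γ) • (Pop P π h - Pop P μ h) := by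
    rw [smul_sub, sub_mul, one_mul, sub_smul]; abel
  have h1 : 0 ≤ (1 - lam) * γ := mul_nonneg (sub_nonneg.2 hl1) hγ0
  have h2 : 0 ≤ lam * γ := mul_nonneg hl0 hγ0
  calc ‖γ • Pop P π h - (lam * γ) • Pop P μ h‖
      ≤ (1 - lam) * γ * ‖Pop P π h‖ + lam * γ * ‖Pop P π h - Pop P μ h‖ := by
        rw [hsplit]
        refine (norm_add_le _ _).trans_eq ?_
        rw [norm_smul, norm_smul, Real.norm_of_nonneg h1, Real.norm_of_nonneg h2]
    _ ≤ (1 - lam) * γ * ‖h‖ + lam * γ * (ε * ‖h‖) := by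
        gcongr
        exact norm_Pop_le_norm hP0 hP1 hπ0 hπ1 h
    _ = γ * (1 - lam + lam * ε) * ‖h‖ := by ring

include hπ0 hπ1 hμ0 hμ1 in
lemma norm_Rpi_sub_le {ε : ℝ} (hε0 : 0 ≤ ε) (hε : ∀ x, ∑ a : A, |π x a - μ x a| ≤ ε)
    {γ lam : ℝ} (hγ0 : 0 < γ) (hγ1 : γ < 1) (hl0 : 0 < lam) (hl1 : lam ≤ 1)
    {r Qπ : X × A → ℝ} (hQπ : Qπ = r + γ • Pop P π Qπ) (Q : X × A → ℝ) :
    ‖Rpi P π μ γ lam r Q - Qπ‖ ≤ γ * (1 - lam + lam * ε) / (1 - lam * γ) * ‖Q - Qπ‖ := by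
  have hq0 : 0 ≤ lam * γ := by positivity
  have hq1 : lam * γ < 1 := by nlinarith
  rw [Rpi_sub_eq hP0 hP1 hμ0 hμ1 hq0 hq1 hQπ, div_mul_eq_mul_div]
  refine (norm_tsum_geometric_smul_iterate_le (norm_Pop_le_norm hP0 hP1 hμ0 hμ1) hq0 hq1 _).trans ?_
  gcongr
  exact norm_smul_Pop_sub_smul_Pop_le hP0 hP1 hπ0 hπ1 hε0 hε hγ0.le hl0.le hl1 _

end MDP

lemma contraction_factor_lt_one {ε γ lam : ℝ} (hγ0 : 0 < γ) (hγ1 : γ < 1) (hl0 : 0 < lam)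
    (hl1 : lam ≤ 1) (hεlt : ε < (1 - γ) / (lam * γ)) :
    γ * (1 - lam + lam * ε) / (1 - lam * γ) < 1 := by
  have hd : 0 < 1 - lam * γ := by nlinarith
  have h := (lt_div_iff₀ (mul_pos hl0 hγ0)).1 hεlt
  rw [div_lt_one hd]
  nlinarith

theorem stmt8_general {X A : Type*} [Fintype X] [Fintype A] [Nonempty X]
    (P : X → A → X → ℝ)
    (hP0 : ∀ x a y, 0 ≤ P x a y) (hP1 : ∀ x a, ∑ y : X, P x a y = 1)
    (π μ : X → A → ℝ)
    (hπ0 : ∀ x a, 0 ≤ π x a) (hπ1 : ∀ x, ∑ a : A, π x a = 1)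
    (hμ0 : ∀ x a, 0 ≤ μ x a) (hμ1 : ∀ x, ∑ a : A, μ x a = 1)
    (ε : ℝ) (hε : ∀ x, ∑ a : A, |π x a - μ x a| ≤ ε)
    (γ : ℝ) (hγ0 : 0 < γ) (hγ1 : γ < 1)
    (lam : ℝ) (hl0 : 0 < lam) (hl1 : lam ≤ 1)
    (hεlt : ε < (1 - γ) / (lam * γ))
    (r : X × A → ℝ) (Qπ : X × A → ℝ)
    (hQπ : Qπ = r + γ • Pop P π Qπ)
    (Q : X × A → ℝ) :
    γ * (1 - lam + lam * ε) / (1 - lam * γ) < 1 ∧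
    (∀ k : ℕ,
      ‖(Rpi P π μ γ lam r)^[k] Q - Qπ‖ ≤
        (γ * (1 - lam + lam * ε) / (1 - lam * γ)) ^ k * ‖Q - Qπ‖) ∧
    Tendsto (fun k : ℕ => (Rpi P π μ γ lam r)^[k] Q) atTop (𝓝 Qπ) := by
  have hε0 : 0 ≤ ε :=
    (Finset.sum_nonneg fun a _ => abs_nonneg _).trans (hε (Classical.arbitrary X))
  have hη0 : 0 ≤ γ * (1 - lam + lam * ε) / (1 - lam * γ) := by
    have hd : 0 ≤ 1 - lam * γ := by nlinarith
    exact div_nonneg (mul_nonneg hγ0.le (by nlinarith [mul_nonneg hl0.le hε0])) hd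
  have hη1 := contraction_factor_lt_one hγ0 hγ1 hl0 hl1 hεlt
  have hstep := norm_Rpi_sub_le hP0 hP1 hπ0 hπ1 hμ0 hμ1 hε0 hε hγ0 hγ1 hl0 hl1 hQπ
  exact ⟨hη1, (norm_iterate_sub_le_of_contracting hη0 hstep · Q),
    tendsto_iterate_of_contracting hη0 hη1 hstep Q⟩

/-- Lemma 1: if μ is ε-away from π, `0 < λ ≤ 1`, `γ ∈ (0,1)` and
`ε < (1−γ)/(λγ)`, then with `η = γ(1−λ+λε)/(1−λγ)` we have `η < 1`, the iterates
`Q_k = (R^π_λ)^k Q` satisfy `‖Q_k − Q^π‖ ≤ η^k ‖Q − Q^π‖`, and `Q_k → Q^π`. -/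
theorem stmt8 {X A : Type*} [Fintype X] [Fintype A] [Nonempty X] [Nonempty A]
    (P : X → A → X → ℝ)
    (hP0 : ∀ x a y, 0 ≤ P x a y) (hP1 : ∀ x a, ∑ y : X, P x a y = 1)
    (π μ : X → A → ℝ)
    (hπ0 : ∀ x a, 0 ≤ π x a) (hπ1 : ∀ x, ∑ a : A, π x a = 1)
    (hμ0 : ∀ x a, 0 ≤ μ x a) (hμ1 : ∀ x, ∑ a : A, μ x a = 1)
    (ε : ℝ) (hε : ∀ x, ∑ a : A, |π x a - μ x a| ≤ ε)
    (γ : ℝ) (hγ0 : 0 < γ) (hγ1 : γ < 1)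
    (lam : ℝ) (hl0 : 0 < lam) (hl1 : lam ≤ 1)
    (hεlt : ε < (1 - γ) / (lam * γ))
    (r : X × A → ℝ) (Qπ : X × A → ℝ)
    (hQπ : Qπ = r + γ • Pop P π Qπ)
    (Q : X × A → ℝ) :
    γ * (1 - lam + lam * ε) / (1 - lam * γ) < 1 ∧
    (∀ k : ℕ,
      ‖(Rpi P π μ γ lam r)^[k] Q - Qπ‖ ≤
        (γ * (1 - lam + lam * ε) / (1 - lam * γ)) ^ k * ‖Q - Qπ‖) ∧
    Tendsto (fun k : ℕ => (Rpi P π μ γ lam r)^[k] Q) atTop (𝓝 Qπ) :=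
  stmt8_general P hP0 hP1 π μ hπ0 hπ1 hμ0 hμ1 ε hε γ hγ0 hγ1 lam hl0 hl1 hεlt r Qπ hQπ Q
end
end

section
/- (General Q(λ) operator rewriting.) For policies π and μ, λ ∈ [0,1), and any Q-function Q, (1−λ) ∑_{n≥0} λ^n [ ∑_{t=0}^{n} γ^t (P^μ)^t r + γ^{n+1} (P^μ)^n P^π Q ] = ∑_{t≥0} (λγ)^t (P^μ)^t [ r + (1−λ) γ P^π Q ], where all series converge. -/
open scoped BigOperators

noncomputable section

/-!
Both sides are linear in `r` and in `P^π Q`. The `P^π Q` parts agree term by term, since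
`(1 - λ) λ^n γ^(n+1) = (1 - λ) γ (λγ)^n`. For the reward part one exchanges the order of
summation: the coefficient of `γ^t (P^μ)^t r` on the left is `(1 - λ) ∑_{n ≥ t} λ^n = λ^t`.
The exchange is legitimate because `P^μ` is nonexpansive in the sup norm, so the double series
converges absolutely.
-/

open Finset

theorem hasSum_geometric_smul_sum_range {E : Type*} [NormedAddCommGroup E] [NormedSpace ℝ E]
    [CompleteSpace E] {c : ℝ} (hc0 : 0 ≤ c) (hc1 : c < 1) {a : ℕ → E} {s : E}
    (ha : Summable (‖a ·‖)) (hs : HasSum (fun t => c ^ t • a t) s) :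
    HasSum (fun n => ((1 - c) * c ^ n) • ∑ t ∈ range (n + 1), a t) s := by
  set w : ℕ × ℕ → ℝ := fun p => if p.2 ≤ p.1 then (1 - c) * c ^ p.1 else 0 with hw
  have hweight : ∀ n, 0 ≤ (1 - c) * c ^ n := fun n => mul_nonneg (by linarith) (pow_nonneg hc0 n)
  have hw_le : ∀ p, ‖w p‖ ≤ (1 - c) * c ^ p.1 := by
    rintro ⟨n, t⟩
    simp only [hw]
    split_ifs
    · rw [Real.norm_eq_abs, abs_of_nonneg (hweight n)]
    · simpa using hweight n
  have hw_tail : ∀ t, HasSum (fun n => w (n, t)) (c ^ t) := by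
    intro t
    have h := (hasSum_geometric_of_lt_one hc0 hc1).mul_left ((1 - c) * c ^ t)
    rw [mul_right_comm, mul_inv_cancel₀ (sub_ne_zero.2 hc1.ne'), one_mul] at h
    have hshift : (fun n => w (n, t)) ∘ (· + t) = fun k => (1 - c) * c ^ t * c ^ k :=
      funext fun k => by
        simp only [hw, Function.comp_apply, le_add_iff_nonneg_left, zero_le, ↓reduceIte, pow_add]
        ring
    rw [← (add_left_injective t).hasSum_iff, hshift]
    · exact h
    · intro n hn
      have : ¬ t ≤ n := fun h => hn ⟨n - t, Nat.sub_add_cancel h⟩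
      simp [hw, this]
  have hF : Summable fun p : ℕ × ℕ => w p • a p.2 := by
    refine .of_norm_bounded (((summable_geometric_of_lt_one hc0 hc1).mul_left (1 - c)).mul_of_nonneg
      ha hweight fun t => norm_nonneg _) fun p => ?_
    rw [norm_smul]
    exact mul_le_mul_of_nonneg_right (hw_le p) (norm_nonneg _)
  have hrow : ∀ n, HasSum (fun t => w (n, t) • a t)
      (((1 - c) * c ^ n) • ∑ t ∈ range (n + 1), a t) := by
    intro n
    have hvanish : ∀ t ∉ range (n + 1), w (n, t) • a t = 0 := by
      intro t ht
      have : ¬ t ≤ n := fun h => ht (mem_range.2 (Nat.lt_succ_of_le h))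
      simp [hw, this]
    have hsum : ∑ t ∈ range (n + 1), w (n, t) • a t
        = ((1 - c) * c ^ n) • ∑ t ∈ range (n + 1), a t := by
      rw [smul_sum]
      refine sum_congr rfl fun t ht => ?_
      simp [hw, Nat.lt_succ_iff.mp (mem_range.mp ht)]
    exact hsum ▸ hasSum_sum_of_ne_finset_zero hvanish
  have hcol : HasSum (fun t => c ^ t • a t) (∑' p, w p • a p.2) :=
    ((Equiv.prodComm ℕ ℕ).hasSum_iff.mpr hF.hasSum).prod_fiberwise
      fun t => (hw_tail t).smul_const (a t)
  exact hcol.unique hs ▸ hF.hasSum.prod_fiberwise hrow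

theorem norm_iterate_le_of_norm_le {E : Type*} [Norm E] {T : E → E} (hT : ∀ x, ‖T x‖ ≤ ‖x‖)
    (n : ℕ) (x : E) : ‖T^[n] x‖ ≤ ‖x‖ := by
  induction n generalizing x with
  | zero => exact le_rfl
  | succ n ih => exact (ih (T x)).trans (hT x)

section Nonexpansive

variable {E : Type*} [NormedAddCommGroup E] [NormedSpace ℝ E]

theorem summable_norm_pow_smul_iterate {T : E → E} (hT : ∀ x, ‖T x‖ ≤ ‖x‖) {c : ℝ}
    (hc0 : 0 ≤ c) (hc1 : c < 1) (x : E) : Summable fun n => ‖c ^ n • T^[n] x‖ := by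
  refine .of_nonneg_of_le (fun _ => norm_nonneg _) (fun n => ?_)
    ((summable_geometric_of_lt_one hc0 hc1).mul_right ‖x‖)
  rw [norm_smul, Real.norm_eq_abs, abs_of_nonneg (pow_nonneg hc0 n)]
  exact mul_le_mul_of_nonneg_left (norm_iterate_le_of_norm_le hT n x) (pow_nonneg hc0 n)

variable [CompleteSpace E]

theorem exists_hasSum_lambda_return {T : Module.End ℝ E} (hT : ∀ x, ‖T x‖ ≤ ‖x‖)
    {γ lam : ℝ} (hγ0 : 0 ≤ γ) (hγ1 : γ < 1) (hl0 : 0 ≤ lam) (hl1 : lam < 1) (r q : E) :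
    ∃ S : E,
      HasSum (fun n : ℕ => ((1 - lam) * lam ^ n) •
        (∑ t ∈ range (n + 1), γ ^ t • T^[t] r + γ ^ (n + 1) • T^[n] q)) S ∧
      HasSum (fun t : ℕ => (lam * γ) ^ t • T^[t] (r + ((1 - lam) * γ) • q)) S := by
  have hlγ0 : 0 ≤ lam * γ := mul_nonneg hl0 hγ0
  have hlγ1 : lam * γ < 1 := (mul_le_of_le_one_left hγ0 hl1.le).trans_lt hγ1
  have hr := (summable_norm_pow_smul_iterate hT hlγ0 hlγ1 r).of_norm.hasSum
  have hq := (summable_norm_pow_smul_iterate hT hlγ0 hlγ1 q).of_norm.hasSum.const_smul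
    ((1 - lam) * γ)
  refine ⟨∑' t, (lam * γ) ^ t • T^[t] r + ((1 - lam) * γ) • ∑' t, (lam * γ) ^ t • T^[t] q,
    ?_, ?_⟩
  · have hr' : HasSum (fun t => lam ^ t • γ ^ t • T^[t] r) (∑' t, (lam * γ) ^ t • T^[t] r) := by
      simpa only [smul_smul, mul_pow] using hr
    convert (hasSum_geometric_smul_sum_range hl0 hl1
      (summable_norm_pow_smul_iterate hT hγ0 hγ1 r) hr').add hq using 2 with n
    rw [smul_add, smul_smul, smul_smul]
    congr 2
    ring
  · convert hr.add hq using 2 with t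
    rw [← Module.End.coe_pow, map_add, map_smul, Module.End.coe_pow]
    module

end Nonexpansive

theorem abs_sum_mul_le_of_sum_eq_one {ι : Type*} (s : Finset ι) {w g : ι → ℝ} {M : ℝ}
    (hw0 : ∀ i ∈ s, 0 ≤ w i) (hw1 : ∑ i ∈ s, w i = 1) (hg : ∀ i ∈ s, |g i| ≤ M) :
    |∑ i ∈ s, w i * g i| ≤ M :=
  calc |∑ i ∈ s, w i * g i| ≤ ∑ i ∈ s, w i * |g i| := by
        refine (abs_sum_le_sum_abs _ _).trans_eq (sum_congr rfl fun i hi => ?_)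
        rw [abs_mul, abs_of_nonneg (hw0 i hi)]
    _ ≤ ∑ i ∈ s, w i * M := sum_le_sum fun i hi => mul_le_mul_of_nonneg_left (hg i hi) (hw0 i hi)
    _ = M := by rw [← sum_mul, hw1, one_mul]

namespace Pop

variable {X A : Type*} [Fintype X] [Fintype A]

def linearMap (P : X → A → X → ℝ) (π : X → A → ℝ) : Module.End ℝ (X × A → ℝ) where
  toFun := Pop P π
  map_add' f g := by
    ext p
    simp only [Pop, Pi.add_apply, mul_add, sum_add_distrib]
  map_smul' c f := by
    ext p
    simp only [Pop, Pi.smul_apply, smul_eq_mul, RingHom.id_apply, mul_sum]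
    exact sum_congr rfl fun y _ => sum_congr rfl fun b _ => by ring

theorem apply_eq_sum_mul_sum (P : X → A → X → ℝ) (π : X → A → ℝ) (f : X × A → ℝ) (p : X × A) :
    Pop P π f p = ∑ y, P p.1 p.2 y * ∑ b, π y b * f (y, b) := by
  simp only [Pop, mul_sum, mul_assoc]

theorem norm_apply_le {P : X → A → X → ℝ} (hP0 : ∀ x a y, 0 ≤ P x a y)
    (hP1 : ∀ x a, ∑ y, P x a y = 1) {π : X → A → ℝ} (hπ0 : ∀ x a, 0 ≤ π x a)
    (hπ1 : ∀ x, ∑ a, π x a = 1) (f : X × A → ℝ) : ‖Pop P π f‖ ≤ ‖f‖ := by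
  refine (pi_norm_le_iff_of_nonneg (norm_nonneg f)).2 fun p => ?_
  rw [Real.norm_eq_abs, apply_eq_sum_mul_sum]
  refine abs_sum_mul_le_of_sum_eq_one _ (fun y _ => hP0 _ _ y) (hP1 _ _) fun y _ => ?_
  refine abs_sum_mul_le_of_sum_eq_one _ (fun b _ => hπ0 y b) (hπ1 y) fun b _ => ?_
  exact norm_le_pi_norm f (y, b)

end Pop

theorem stmt15_general {X A : Type*} [Fintype X] [Fintype A]
    (P : X → A → X → ℝ)
    (hP0 : ∀ x a y, 0 ≤ P x a y) (hP1 : ∀ x a, ∑ y : X, P x a y = 1)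
    (π μ : X → A → ℝ)
    (hμ0 : ∀ x a, 0 ≤ μ x a) (hμ1 : ∀ x, ∑ a : A, μ x a = 1)
    (γ : ℝ) (hγ0 : 0 ≤ γ) (hγ1 : γ < 1)
    (lam : ℝ) (hl0 : 0 ≤ lam) (hl1 : lam < 1)
    (r : X × A → ℝ) (Q : X × A → ℝ) :
    Summable (fun n : ℕ => ((1 - lam) * lam ^ n) •
      (∑ t ∈ Finset.range (n + 1), γ ^ t • (Pop P μ)^[t] r
        + γ ^ (n + 1) • (Pop P μ)^[n] (Pop P π Q))) ∧
    Summable (fun t : ℕ => (lam * γ) ^ t •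
      (Pop P μ)^[t] (r + ((1 - lam) * γ) • Pop P π Q)) ∧
    ∑' n : ℕ, ((1 - lam) * lam ^ n) •
        (∑ t ∈ Finset.range (n + 1), γ ^ t • (Pop P μ)^[t] r
          + γ ^ (n + 1) • (Pop P μ)^[n] (Pop P π Q)) =
      ∑' t : ℕ, (lam * γ) ^ t • (Pop P μ)^[t] (r + ((1 - lam) * γ) • Pop P π Q) := by
  obtain ⟨S, hlhs, hrhs⟩ := exists_hasSum_lambda_return (T := Pop.linearMap P μ)
    (Pop.norm_apply_le hP0 hP1 hμ0 hμ1) hγ0 hγ1 hl0 hl1 r (Pop P π Q)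
  exact ⟨hlhs.summable, hrhs.summable, hlhs.tsum_eq.trans hrhs.tsum_eq.symm⟩

/-- General Q(λ) operator rewriting:
`(1−λ) ∑_{n≥0} λ^n [ ∑_{t=0}^{n} γ^t (P^μ)^t r + γ^{n+1} (P^μ)^n P^π Q ]
  = ∑_{t≥0} (λγ)^t (P^μ)^t [ r + (1−λ) γ P^π Q ]`, all series converging. -/
theorem stmt15 {X A : Type*} [Fintype X] [Fintype A] [Nonempty X] [Nonempty A]
    (P : X → A → X → ℝ)
    (hP0 : ∀ x a y, 0 ≤ P x a y) (hP1 : ∀ x a, ∑ y : X, P x a y = 1)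
    (π μ : X → A → ℝ)
    (hπ0 : ∀ x a, 0 ≤ π x a) (hπ1 : ∀ x, ∑ a : A, π x a = 1)
    (hμ0 : ∀ x a, 0 ≤ μ x a) (hμ1 : ∀ x, ∑ a : A, μ x a = 1)
    (γ : ℝ) (hγ0 : 0 ≤ γ) (hγ1 : γ < 1)
    (lam : ℝ) (hl0 : 0 ≤ lam) (hl1 : lam < 1)
    (r : X × A → ℝ) (Q : X × A → ℝ) :
    Summable (fun n : ℕ => ((1 - lam) * lam ^ n) •
      (∑ t ∈ Finset.range (n + 1), γ ^ t • (Pop P μ)^[t] r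
        + γ ^ (n + 1) • (Pop P μ)^[n] (Pop P π Q))) ∧
    Summable (fun t : ℕ => (lam * γ) ^ t •
      (Pop P μ)^[t] (r + ((1 - lam) * γ) • Pop P π Q)) ∧
    ∑' n : ℕ, ((1 - lam) * lam ^ n) •
        (∑ t ∈ Finset.range (n + 1), γ ^ t • (Pop P μ)^[t] r
          + γ ^ (n + 1) • (Pop P μ)^[n] (Pop P π Q)) =
      ∑' t : ℕ, (lam * γ) ^ t • (Pop P μ)^[t] (r + ((1 - lam) * γ) • Pop P π Q) :=
  stmt15_general P hP0 hP1 π μ hμ0 hμ1 γ hγ0 hγ1 lam hl0 hl1 r Q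
end
end

section
/- (Proposition 1, existence/uniqueness of the General Q(λ) fixed point.) For policies π and μ and λ ∈ [0,1), the operator R Q := ∑_{t≥0} (λγ)^t (P^μ)^t [ r + (1−λ) γ P^π Q ] satisfies ‖R Q₁ − R Q₂‖ ≤ [(1−λ)γ/(1−λγ)] ‖Q₁ − Q₂‖ with (1−λ)γ/(1−λγ) < 1; hence R has a unique fixed point Q^{μ,π}, which is the unique Q-function satisfying Q^{μ,π} − λγ P^μ Q^{μ,π} − (1−λ)γ P^π Q^{μ,π} = r. -/
open scoped BigOperators

noncomputable section

/-- The General Q(λ) operator `R Q = ∑_{t≥0} (λγ)^t (P^μ)^t [ r + (1−λ) γ P^π Q ]`. -/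
def Rgen {X A : Type*} [Fintype X] [Fintype A] (P : X → A → X → ℝ) (π μ : X → A → ℝ)
    (γ lam : ℝ) (r : X × A → ℝ) (Q : X × A → ℝ) : X × A → ℝ :=
  ∑' t : ℕ, (lam * γ) ^ t • (Pop P μ)^[t] (r + ((1 - lam) * γ) • Pop P π Q)

/-!
Write `R Q = S (r + (1 - λ) γ P^π Q)` with `S = ∑ₜ (λγ P^μ)^t`. Since `P^μ` and `P^π` are
stochastic they are nonexpansive in the sup norm, so `S` is the Neumann series of `1 - λγ P^μ`,
with `‖S‖ ≤ 1 / (1 - λγ)`. This gives the contraction factor `(1 - λ)γ / (1 - λγ)`, which is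
`< 1` exactly because `γ < 1`, so Banach's theorem gives a unique fixed point. Applying the
inverse `1 - λγ P^μ` of `S` turns `R Q = Q` into `Q - λγ P^μ Q - (1 - λ)γ P^π Q = r`, so the
fixed points of `R` are exactly the solutions of that linear equation.
-/

namespace ContinuousLinearMap

variable {𝕜 E : Type*} [NontriviallyNormedField 𝕜] [NormedAddCommGroup E] [NormedSpace 𝕜 E]

theorem norm_geom_series_le {T : E →L[𝕜] E} (hT : ‖T‖ < 1) : ‖∑' n, T ^ n‖ ≤ (1 - ‖T‖)⁻¹ := by
  have h := tsum_geometric_le_of_norm_lt_one T hT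
  have h1 : ‖(1 : E →L[𝕜] E)‖ ≤ 1 := norm_id_le
  linarith

variable [CompleteSpace E]

theorem geom_series_apply_eq_iff {T : E →L[𝕜] E} (hT : ‖T‖ < 1) {g y : E} :
    (∑' n, T ^ n) g = y ↔ g = y - T y := by
  constructor
  · rintro rfl
    simpa using (congrArg (· g) (mul_neg_geom_series T hT)).symm
  · rintro rfl
    simpa using congrArg (· y) (geom_series_mul_neg T hT)

theorem geom_series_smul_apply (T : E →L[𝕜] E) {c : 𝕜} (hc : ‖c • T‖ < 1) (g : E) :
    (∑' n, (c • T) ^ n) g = ∑' n, c ^ n • (⇑T)^[n] g := by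
  have h := (apply 𝕜 E g).map_tsum (summable_geometric_of_norm_lt_one hc)
  simpa only [apply_apply, smul_pow, _root_.smul_apply, FunLike.coe_pow_eq_iterate] using h

end ContinuousLinearMap

theorem exists_unique_fixedPoint_of_norm_sub_le {E : Type*} [NormedAddCommGroup E]
    [CompleteSpace E] {f : E → E} {K : ℝ} (hK0 : 0 ≤ K) (hK1 : K < 1)
    (hf : ∀ x y, ‖f x - f y‖ ≤ K * ‖x - y‖) : ∃ x, f x = x ∧ ∀ y, f y = y → y = x := by
  have hcontr : ContractingWith K.toNNReal f := by
    refine ⟨by rwa [← NNReal.coe_lt_coe, Real.coe_toNNReal K hK0], ?_⟩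
    refine LipschitzWith.of_dist_le_mul fun x y => ?_
    rw [dist_eq_norm, dist_eq_norm, Real.coe_toNNReal K hK0]
    exact hf x y
  exact ⟨_, hcontr.fixedPoint_isFixedPt, fun y hy => hcontr.fixedPoint_unique hy⟩

section GeneralQLambda

variable {X A : Type*} [Fintype X] [Fintype A]

def popCLM (P : X → A → X → ℝ) (π : X → A → ℝ) : (X × A → ℝ) →L[ℝ] (X × A → ℝ) :=
  LinearMap.toContinuousLinearMap
    { toFun := Pop P π
      map_add' := fun Q₁ Q₂ => by
        funext p
        simp only [Pop, Pi.add_apply, mul_add, Finset.sum_add_distrib]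
      map_smul' := fun c Q => by
        funext p
        simp only [Pop, Pi.smul_apply, smul_eq_mul, RingHom.id_apply, Finset.mul_sum]
        exact Finset.sum_congr rfl fun y _ => Finset.sum_congr rfl fun b _ => by ring }

@[simp]
theorem popCLM_apply (P : X → A → X → ℝ) (π : X → A → ℝ) (Q : X × A → ℝ) :
    popCLM P π Q = Pop P π Q :=
  rfl

theorem norm_pop_le (P : X → A → X → ℝ) (hP0 : ∀ x a y, 0 ≤ P x a y)
    (hP1 : ∀ x a, ∑ y : X, P x a y = 1) (π : X → A → ℝ) (hπ0 : ∀ x a, 0 ≤ π x a)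
    (hπ1 : ∀ x, ∑ a : A, π x a = 1) (Q : X × A → ℝ) : ‖Pop P π Q‖ ≤ ‖Q‖ := by
  refine (pi_norm_le_iff_of_nonneg (norm_nonneg Q)).2 fun p => ?_
  have hweight : ∑ y : X, ∑ b : A, P p.1 p.2 y * π y b = 1 := by
    simp only [← Finset.mul_sum, hπ1, mul_one, hP1]
  calc ‖∑ y : X, ∑ b : A, P p.1 p.2 y * π y b * Q (y, b)‖
      ≤ ∑ y : X, ∑ b : A, ‖P p.1 p.2 y * π y b * Q (y, b)‖ :=
        (norm_sum_le _ _).trans (Finset.sum_le_sum fun y _ => norm_sum_le _ _)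
    _ ≤ ∑ y : X, ∑ b : A, P p.1 p.2 y * π y b * ‖Q‖ := by
        gcongr with y _ b _
        rw [norm_mul, Real.norm_of_nonneg (mul_nonneg (hP0 _ _ _) (hπ0 _ _))]
        exact mul_le_mul_of_nonneg_left (norm_le_pi_norm Q (y, b))
          (mul_nonneg (hP0 _ _ _) (hπ0 _ _))
    _ = ‖Q‖ := by simp only [← Finset.sum_mul, hweight, one_mul]

theorem norm_smul_popCLM_le {P : X → A → X → ℝ} {π : X → A → ℝ}
    (hπ : ∀ Q, ‖Pop P π Q‖ ≤ ‖Q‖) {c : ℝ} (hc : 0 ≤ c) : ‖c • popCLM P π‖ ≤ c := by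
  refine ContinuousLinearMap.opNorm_le_bound _ hc fun Q => ?_
  rw [smul_apply, norm_smul, Real.norm_of_nonneg hc, popCLM_apply]
  exact mul_le_mul_of_nonneg_left (hπ Q) hc

variable {P : X → A → X → ℝ} {π μ : X → A → ℝ} {γ lam : ℝ} {r : X × A → ℝ}

theorem Rgen_eq_geom_series_apply (hc : ‖(lam * γ) • popCLM P μ‖ < 1) (Q : X × A → ℝ) :
    Rgen P π μ γ lam r Q =
      (∑' n, ((lam * γ) • popCLM P μ) ^ n) (r + ((1 - lam) * γ) • Pop P π Q) :=
  (ContinuousLinearMap.geom_series_smul_apply _ hc _).symm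

theorem norm_Rgen_sub_le (hμ : ∀ Q, ‖Pop P μ Q‖ ≤ ‖Q‖) (hπ : ∀ Q, ‖Pop P π Q‖ ≤ ‖Q‖)
    (hc0 : 0 ≤ lam * γ) (hc1 : lam * γ < 1) (hk : 0 ≤ (1 - lam) * γ) (Q₁ Q₂ : X × A → ℝ) :
    ‖Rgen P π μ γ lam r Q₁ - Rgen P π μ γ lam r Q₂‖ ≤
      (1 - lam) * γ / (1 - lam * γ) * ‖Q₁ - Q₂‖ := by
  set T := (lam * γ) • popCLM P μ
  have hT : ‖T‖ ≤ lam * γ := norm_smul_popCLM_le hμ hc0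
  have hT1 : ‖T‖ < 1 := hT.trans_lt hc1
  have hsource : (r + ((1 - lam) * γ) • Pop P π Q₁) - (r + ((1 - lam) * γ) • Pop P π Q₂) =
      ((1 - lam) * γ) • popCLM P π (Q₁ - Q₂) := by
    simp only [map_sub, popCLM_apply, smul_sub, add_sub_add_left_eq_sub]
  rw [Rgen_eq_geom_series_apply hT1, Rgen_eq_geom_series_apply hT1, ← map_sub, hsource]
  calc ‖(∑' n, T ^ n) (((1 - lam) * γ) • popCLM P π (Q₁ - Q₂))‖
      ≤ ‖∑' n, T ^ n‖ * ((1 - lam) * γ * ‖Q₁ - Q₂‖) := by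
        refine (ContinuousLinearMap.le_opNorm _ _).trans (mul_le_mul_of_nonneg_left ?_ ?_)
        · rw [norm_smul, Real.norm_of_nonneg hk]
          exact mul_le_mul_of_nonneg_left (hπ _) hk
        · exact norm_nonneg _
    _ ≤ (1 - lam * γ)⁻¹ * ((1 - lam) * γ * ‖Q₁ - Q₂‖) := by
        gcongr
        refine (ContinuousLinearMap.norm_geom_series_le hT1).trans ?_
        gcongr
    _ = (1 - lam) * γ / (1 - lam * γ) * ‖Q₁ - Q₂‖ := by ring

theorem Rgen_eq_self_iff (hμ : ∀ Q, ‖Pop P μ Q‖ ≤ ‖Q‖) (hc0 : 0 ≤ lam * γ)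
    (hc1 : lam * γ < 1) (Q : X × A → ℝ) :
    Rgen P π μ γ lam r Q = Q ↔
      Q - (lam * γ) • Pop P μ Q - ((1 - lam) * γ) • Pop P π Q = r := by
  have hT1 := (norm_smul_popCLM_le hμ hc0).trans_lt hc1
  rw [Rgen_eq_geom_series_apply hT1, ContinuousLinearMap.geom_series_apply_eq_iff hT1,
    smul_apply, popCLM_apply, sub_eq_iff_eq_add, eq_comm, add_comm]

end GeneralQLambda

theorem stmt17_general {X A : Type*} [Fintype X] [Fintype A]
    (P : X → A → X → ℝ)
    (hP0 : ∀ x a y, 0 ≤ P x a y) (hP1 : ∀ x a, ∑ y : X, P x a y = 1)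
    (π μ : X → A → ℝ)
    (hπ0 : ∀ x a, 0 ≤ π x a) (hπ1 : ∀ x, ∑ a : A, π x a = 1)
    (hμ0 : ∀ x a, 0 ≤ μ x a) (hμ1 : ∀ x, ∑ a : A, μ x a = 1)
    (γ : ℝ) (hγ0 : 0 ≤ γ) (hγ1 : γ < 1)
    (lam : ℝ) (hl0 : 0 ≤ lam) (hl1 : lam < 1)
    (r : X × A → ℝ) :
    (∀ Q₁ Q₂ : X × A → ℝ,
      ‖Rgen P π μ γ lam r Q₁ - Rgen P π μ γ lam r Q₂‖ ≤
        (1 - lam) * γ / (1 - lam * γ) * ‖Q₁ - Q₂‖) ∧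
    (1 - lam) * γ / (1 - lam * γ) < 1 ∧
    ∃ Qmp : X × A → ℝ,
      Rgen P π μ γ lam r Qmp = Qmp ∧
      (∀ Q : X × A → ℝ, Rgen P π μ γ lam r Q = Q → Q = Qmp) ∧
      Qmp - (lam * γ) • Pop P μ Qmp - ((1 - lam) * γ) • Pop P π Qmp = r ∧
      (∀ Q : X × A → ℝ,
        Q - (lam * γ) • Pop P μ Q - ((1 - lam) * γ) • Pop P π Q = r → Q = Qmp) := by
  have hc0 : 0 ≤ lam * γ := mul_nonneg hl0 hγ0
  have hc1 : lam * γ < 1 := by nlinarith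
  have hk : 0 ≤ (1 - lam) * γ := mul_nonneg (by linarith) hγ0
  have hμ := norm_pop_le P hP0 hP1 μ hμ0 hμ1
  have hπ := norm_pop_le P hP0 hP1 π hπ0 hπ1
  have hcontr := norm_Rgen_sub_le (r := r) hμ hπ hc0 hc1 hk
  have hκ : (1 - lam) * γ / (1 - lam * γ) < 1 := by
    rw [div_lt_one (by linarith)]
    nlinarith
  obtain ⟨Qmp, hfix, huniq⟩ :=
    exists_unique_fixedPoint_of_norm_sub_le (div_nonneg hk (by linarith)) hκ hcontr
  have hsolve := Rgen_eq_self_iff (π := π) (r := r) hμ hc0 hc1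
  exact ⟨hcontr, hκ, Qmp, hfix, huniq, (hsolve Qmp).1 hfix,
    fun Q hQ => huniq Q ((hsolve Q).2 hQ)⟩

/-- Proposition 1, existence/uniqueness: `R` is a contraction with
coefficient `(1−λ)γ/(1−λγ) < 1`, hence has a unique fixed point `Q^{μ,π}`, which is the
unique Q-function satisfying `Q − λγ P^μ Q − (1−λ)γ P^π Q = r`. -/
theorem stmt17 {X A : Type*} [Fintype X] [Fintype A] [Nonempty X] [Nonempty A]
    (P : X → A → X → ℝ)
    (hP0 : ∀ x a y, 0 ≤ P x a y) (hP1 : ∀ x a, ∑ y : X, P x a y = 1)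
    (π μ : X → A → ℝ)
    (hπ0 : ∀ x a, 0 ≤ π x a) (hπ1 : ∀ x, ∑ a : A, π x a = 1)
    (hμ0 : ∀ x a, 0 ≤ μ x a) (hμ1 : ∀ x, ∑ a : A, μ x a = 1)
    (γ : ℝ) (hγ0 : 0 ≤ γ) (hγ1 : γ < 1)
    (lam : ℝ) (hl0 : 0 ≤ lam) (hl1 : lam < 1)
    (r : X × A → ℝ) :
    (∀ Q₁ Q₂ : X × A → ℝ,
      ‖Rgen P π μ γ lam r Q₁ - Rgen P π μ γ lam r Q₂‖ ≤
        (1 - lam) * γ / (1 - lam * γ) * ‖Q₁ - Q₂‖) ∧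
    (1 - lam) * γ / (1 - lam * γ) < 1 ∧
    ∃ Qmp : X × A → ℝ,
      Rgen P π μ γ lam r Qmp = Qmp ∧
      (∀ Q : X × A → ℝ, Rgen P π μ γ lam r Q = Q → Q = Qmp) ∧
      Qmp - (lam * γ) • Pop P μ Qmp - ((1 - lam) * γ) • Pop P π Qmp = r ∧
      (∀ Q : X × A → ℝ,
        Q - (lam * γ) • Pop P μ Q - ((1 - lam) * γ) • Pop P π Q = r → Q = Qmp) :=
  stmt17_general P hP0 hP1 π μ hπ0 hπ1 hμ0 hμ1 γ hγ0 hγ1 lam hl0 hl1 r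
end
end
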